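/- arXiv:0901.4239 — 3 statements merged into one kernel-verified Lean document; each statement's English description precedes it below -/
import Mathlib

section
/- Let η ∈ GL(n, ℤ) be semisimple (i.e., diagonalizable over ℂ) and let [η] denote its GL(n, ℤ)-conjugacy class. Then every element of the closure of [η] in GL(n, ℤ_p) is conjugate to η by an element of GL(n, ℤ_p); in particular, every element of the closure is semisimple. -/
open Matrix Topology Filter Polynomial

/-- A matrix over `R` is semisimple with respect to a ring hom `f : R →+* K`
(with `K` typically algebraically closed) if its image under `f` is diagonalizable. -/
def Matrix.IsSemisimpleOver {n : ℕ} {R K : Type*} [CommRing R] [Field K] (f : R →+* K)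
    (A : Matrix (Fin n) (Fin n) R) : Prop :=
  ∃ P : GL (Fin n) K, ∃ d : Fin n → K,
    A.map f = (P : Matrix (Fin n) (Fin n) K) * Matrix.diagonal d * ((P⁻¹ : GL (Fin n) K) : Matrix (Fin n) (Fin n) K)

/-! GL(n, ℤ_p) is compact, so the GL(n, ℤ_p)-conjugacy class of η is compact, hence closed; it
contains the image of the GL(n, ℤ)-class, hence also λ.

Over an algebraically closed field a matrix is diagonalizable iff it is killed by a squarefree
polynomial, and then it is killed by the product of `X - c` over its distinct eigenvalues. The
latter polynomial commutes with field embeddings, so diagonalizability descends from ℂ to the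
algebraic closure of ℚ and ascends from there to the algebraic closure of ℚ_p, where it passes to
the conjugate λ of η. -/

instance Matrix.compactSpace {m n R : Type*} [TopologicalSpace R] [CompactSpace R] :
    CompactSpace (Matrix m n R) :=
  inferInstanceAs (CompactSpace (m → n → R))

theorem MonoidHom.closure_image_conj_subset {H G : Type*} [Group H] [Group G]
    [TopologicalSpace G] [IsTopologicalGroup G] [CompactSpace G] [T2Space G]
    (θ : H →* G) (x : H) :
    closure (θ '' {z | ∃ g : H, z = g⁻¹ * x * g}) ⊆
      Set.range fun g : G => g⁻¹ * θ x * g := by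
  refine closure_minimal ?_ (isCompact_range (by fun_prop)).isClosed
  rintro _ ⟨_, ⟨g, rfl⟩, rfl⟩
  exact ⟨θ g, by simp⟩

theorem Polynomial.aeval_units_conj {R A : Type*} [CommSemiring R] [Semiring A] [Algebra R A]
    (u : Aˣ) (a : A) (q : R[X]) : aeval (u * a * ↑u⁻¹) q = u * aeval a q * ↑u⁻¹ :=
  aeval_algHom_apply (MulSemiringAction.toAlgHom R A (ConjAct.toConjAct u)) a q

theorem Module.End.exists_basis_apply_eq_smul {ι K : Type*} [Fintype ι] [Field K]
    [IsAlgClosed K] {f : Module.End K (ι → K)} (hf : f.IsSemisimple) :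
    ∃ (b : Module.Basis ι K (ι → K)) (μ : ι → K), ∀ i, f (b i) = μ i • b i := by
  classical
  have hint := DirectSum.isInternal_submodule_of_iSupIndep_of_iSup_eq_top
    f.eigenspaces_iSupIndep hf.iSup_eigenspace_eq_top
  let v := hint.collectedBasis fun μ ↦ Module.finBasis K (f.eigenspace μ)
  let e := v.indexEquiv (Pi.basisFun K ι)
  refine ⟨v.reindex e, fun i => (e.symm i).1, fun i => ?_⟩
  rw [Module.Basis.reindex_apply]
  exact Module.End.mem_eigenspace_iff.mp (hint.collectedBasis_mem _ _)

namespace Matrix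

theorem aeval_diagonal {ι K : Type*} [Fintype ι] [DecidableEq ι] [CommSemiring K]
    (d : ι → K) (q : K[X]) : aeval (diagonal d) q = diagonal fun i => q.eval (d i) := by
  rw [← diagonalAlgHom_apply K, aeval_algHom_apply, diagonalAlgHom_apply]
  congr 1
  ext i
  exact aeval_fn_apply q d i

theorem map_aeval {ι K L : Type*} [Fintype ι] [DecidableEq ι] [CommSemiring K] [CommSemiring L]
    (f : K →+* L) (A : Matrix ι ι K) (q : K[X]) :
    (aeval A q).map f = aeval (A.map f) (q.map f) :=
  map_aeval_eq_aeval_map (ψ := f.mapMatrix)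
    (by ext; simp [algebraMap_eq_diagonal, diagonal_apply, apply_ite f]) q A

variable {ι K : Type*} [Fintype ι] [DecidableEq ι] [Field K]

theorem exists_eq_conj_diagonal_of_basis {A : Matrix ι ι K} (b : Module.Basis ι K (ι → K))
    (μ : ι → K) (hb : ∀ i, A *ᵥ b i = μ i • b i) :
    ∃ P : GL ι K,
      A = (P : Matrix ι ι K) * diagonal μ * ((P⁻¹ : GL ι K) : Matrix ι ι K) := by
  let e := Pi.basisFun K ι
  refine ⟨⟨e.toMatrix b, b.toMatrix e, e.toMatrix_mul_toMatrix_flip b,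
    b.toMatrix_mul_toMatrix_flip e⟩, ?_⟩
  have hdiag : LinearMap.toMatrix b b (toLin' A) = diagonal μ := by
    ext i j
    rw [LinearMap.toMatrix_apply, toLin'_apply, hb, map_smul, b.repr_self]
    by_cases h : i = j <;> simp [h]
  calc A = LinearMap.toMatrix e e (toLin' A) := by
        rw [LinearMap.toMatrix_eq_toMatrix', LinearMap.toMatrix'_toLin']
    _ = e.toMatrix b * LinearMap.toMatrix b b (toLin' A) * b.toMatrix e :=
        (basis_toMatrix_mul_linearMap_toMatrix_mul_basis_toMatrix ..).symm
    _ = _ := by rw [hdiag]; rfl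

theorem exists_eq_conj_diagonal_of_squarefree [IsAlgClosed K] {A : Matrix ι ι K} {q : K[X]}
    (hq : Squarefree q) (hA : aeval A q = 0) :
    ∃ (P : GL ι K) (d : ι → K),
      A = (P : Matrix ι ι K) * diagonal d * ((P⁻¹ : GL ι K) : Matrix ι ι K) := by
  have hss : Module.End.IsSemisimple (toLin' A) := by
    refine Module.End.isSemisimple_of_squarefree_aeval_eq_zero hq ?_
    change aeval (toLinAlgEquiv' A) q = 0
    rw [aeval_algEquiv, AlgHom.comp_apply, hA, map_zero]
  obtain ⟨b, μ, hb⟩ := Module.End.exists_basis_apply_eq_smul hss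
  obtain ⟨P, hP⟩ := exists_eq_conj_diagonal_of_basis b μ hb
  exact ⟨P, μ, hP⟩

open scoped Classical in
/-- The radical of the characteristic polynomial when the latter splits over `K`. -/
noncomputable def charpolyRadical (A : Matrix ι ι K) : K[X] :=
  ∏ c ∈ A.charpoly.roots.toFinset, (X - C c)

theorem squarefree_charpolyRadical (A : Matrix ι ι K) : Squarefree A.charpolyRadical :=
  (separable_prod_X_sub_C_iff'.mpr fun _ _ _ _ h => h).squarefree

theorem charpolyRadical_map [IsAlgClosed K] {L : Type*} [Field L] (j : K →+* L)
    (A : Matrix ι ι K) : (A.map j).charpolyRadical = A.charpolyRadical.map j := by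
  classical
  rw [charpolyRadical, charpolyRadical, charpoly_map, (IsAlgClosed.splits _).roots_map,
    Multiset.toFinset_map, Finset.prod_image fun _ _ _ _ h => j.injective h, Polynomial.map_prod]
  simp

theorem eval_charpolyRadical_eq_zero {A : Matrix ι ι K} {c : K} (hc : c ∈ A.charpoly.roots) :
    A.charpolyRadical.eval c = 0 := by
  classical
  rw [charpolyRadical, eval_prod]
  exact Finset.prod_eq_zero (Multiset.mem_toFinset.mpr hc) (by simp)

theorem charpolyRadical_units_conj (P : GL ι K) (A : Matrix ι ι K) :
    ((P : Matrix ι ι K) * A * ((P⁻¹ : GL ι K) : Matrix ι ι K)).charpolyRadical =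
      A.charpolyRadical := by
  rw [charpolyRadical, charpolyRadical, coe_units_inv, charpoly_units_conj]

theorem aeval_charpolyRadical_conj_diagonal (P : GL ι K) (d : ι → K) :
    aeval ((P : Matrix ι ι K) * diagonal d * ((P⁻¹ : GL ι K) : Matrix ι ι K))
      ((P : Matrix ι ι K) * diagonal d * ((P⁻¹ : GL ι K) : Matrix ι ι K)).charpolyRadical =
        0 := by
  have hroot (i : ι) : d i ∈ (diagonal d).charpoly.roots := by
    rw [mem_roots (charpoly_monic _).ne_zero, IsRoot, charpoly_diagonal, eval_prod]
    exact Finset.prod_eq_zero (Finset.mem_univ i) (by simp)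
  rw [charpolyRadical_units_conj, aeval_units_conj, aeval_diagonal]
  simp [eval_charpolyRadical_eq_zero (hroot _)]

theorem isSemisimpleOver_map_iff {n : ℕ} {R S K : Type*} [CommRing R] [CommRing S] [Field K]
    (f : R →+* S) (g : S →+* K) {A : Matrix (Fin n) (Fin n) R} :
    IsSemisimpleOver g (A.map f) ↔ IsSemisimpleOver (g.comp f) A :=
  Iff.rfl

namespace IsSemisimpleOver

variable {n : ℕ} {R : Type*} [CommRing R] {f : R →+* K} {A : Matrix (Fin n) (Fin n) R}

theorem units_conj (h : IsSemisimpleOver f A) (P : GL (Fin n) R) :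
    IsSemisimpleOver f
      ((P : Matrix (Fin n) (Fin n) R) * A *
        ((P⁻¹ : GL (Fin n) R) : Matrix (Fin n) (Fin n) R)) := by
  obtain ⟨Q, d, hQ⟩ := h
  refine ⟨GeneralLinearGroup.map f P * Q, d, ?_⟩
  rw [Matrix.map_mul, Matrix.map_mul, hQ]
  simp only [_root_.mul_inv_rev, Units.val_mul, Matrix.mul_assoc]
  rfl

theorem comp {L : Type*} [Field L] (h : IsSemisimpleOver f A) (j : K →+* L) :
    IsSemisimpleOver (j.comp f) A := by
  obtain ⟨P, d, hP⟩ := h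
  refine (isSemisimpleOver_map_iff f j).1 ⟨GeneralLinearGroup.map j P, j ∘ d, ?_⟩
  rw [hP, Matrix.map_mul, Matrix.map_mul, diagonal_map (map_zero j), ← map_inv]
  rfl

theorem aeval_charpolyRadical (h : IsSemisimpleOver f A) :
    aeval (A.map f) (A.map f).charpolyRadical = 0 := by
  obtain ⟨P, d, hP⟩ := h
  rw [hP]
  exact aeval_charpolyRadical_conj_diagonal P d

end IsSemisimpleOver

theorem isSemisimpleOver_comp_iff {n : ℕ} {R L : Type*} [CommRing R] [IsAlgClosed K] [Field L]
    {f : R →+* K} (j : K →+* L) {A : Matrix (Fin n) (Fin n) R} :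
    IsSemisimpleOver (j.comp f) A ↔ IsSemisimpleOver f A := by
  refine ⟨fun h => exists_eq_conj_diagonal_of_squarefree (A.map f).squarefree_charpolyRadical ?_,
    fun h => h.comp j⟩
  have hj := ((isSemisimpleOver_map_iff f j).2 h).aeval_charpolyRadical
  rw [charpolyRadical_map, ← map_aeval] at hj
  ext k l
  simpa using congrFun (congrFun hj k) l

end Matrix

/-- If `η ∈ GL(n,ℤ)` is semisimple (diagonalizable over `ℂ`), then every element of the
closure of its `GL(n,ℤ)`-conjugacy class in `GL(n,ℤ_p)` is conjugate to `η` by an element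
of `GL(n,ℤ_p)`; in particular every element of the closure is semisimple. -/
theorem closure_conjClass_semisimple {p : ℕ} [Fact p.Prime] {n : ℕ}
    (η : GL (Fin n) ℤ)
    (hss : Matrix.IsSemisimpleOver (Int.castRingHom ℂ) (η : Matrix (Fin n) (Fin n) ℤ))
    (lam : GL (Fin n) ℤ_[p])
    (hlam : lam ∈ closure
      ((Matrix.GeneralLinearGroup.map (n := Fin n) (Int.castRingHom ℤ_[p])) ''
        {x : GL (Fin n) ℤ | ∃ g : GL (Fin n) ℤ, x = g⁻¹ * η * g})) :
    (∃ β : GL (Fin n) ℤ_[p],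
        β⁻¹ * lam * β = Matrix.GeneralLinearGroup.map (n := Fin n) (Int.castRingHom ℤ_[p]) η) ∧
      Matrix.IsSemisimpleOver
        ((algebraMap ℚ_[p] (AlgebraicClosure ℚ_[p])).comp PadicInt.Coe.ringHom)
        (lam : Matrix (Fin n) (Fin n) ℤ_[p]) := by
  set θ := Matrix.GeneralLinearGroup.map (n := Fin n) (Int.castRingHom ℤ_[p])
  obtain ⟨g, rfl⟩ := θ.closure_image_conj_subset η hlam
  refine ⟨⟨g⁻¹, by group⟩, ?_⟩
  have : Algebra.IsAlgebraic ℚ (AlgebraicClosure ℚ) := AlgebraicClosure.isAlgebraic ℚ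
  let j : AlgebraicClosure ℚ →+* ℂ := (IsAlgClosed.lift (R := ℚ)).toRingHom
  let i : AlgebraicClosure ℚ →+* AlgebraicClosure ℚ_[p] :=
    (IsAlgClosed.lift (R := ℚ)).toRingHom
  have hQbar : IsSemisimpleOver (Int.castRingHom (AlgebraicClosure ℚ))
      (η : Matrix (Fin n) (Fin n) ℤ) :=
    (isSemisimpleOver_comp_iff j).1 (by rwa [RingHom.ext_int (j.comp _) (Int.castRingHom ℂ)])
  have hθη : IsSemisimpleOver
      ((algebraMap ℚ_[p] (AlgebraicClosure ℚ_[p])).comp PadicInt.Coe.ringHom)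
      (θ η : Matrix (Fin n) (Fin n) ℤ_[p]) := by
    refine (isSemisimpleOver_map_iff _ _).2 ?_
    rw [RingHom.ext_int (RingHom.comp _ _) (i.comp (Int.castRingHom _))]
    exact hQbar.comp i
  simpa using hθη.units_conj g⁻¹
end

section
/- Every element of a torsion-free virtually unipotent subgroup Γ ≤ GL(n, ℤ) has its semisimple Jordan factor γ_s of finite order, and both Jordan factors γ_s, γ_u have entries in ℚ. -/
open Matrix

def Matrix.IsUnipotent {n : ℕ} {R : Type*} [CommRing R] (A : Matrix (Fin n) (Fin n) R) : Prop :=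
  IsNilpotent (A - 1)

def Subgroup.IsVirtuallyUnipotent {n : ℕ} (Γ : Subgroup (GL (Fin n) ℤ)) : Prop :=
  ∃ H : Subgroup (GL (Fin n) ℤ), H ≤ Γ ∧ H.relIndex Γ ≠ 0 ∧
    ∃ P : GL (Fin n) ℂ, ∀ h ∈ H,
      (((P⁻¹ : GL (Fin n) ℂ) : Matrix (Fin n) (Fin n) ℂ) *
          ((h : Matrix (Fin n) (Fin n) ℤ).map (Int.cast : ℤ → ℂ)) *
          (P : Matrix (Fin n) (Fin n) ℂ)).BlockTriangular (id : Fin n → Fin n) ∧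
      ∀ i : Fin n,
        (((P⁻¹ : GL (Fin n) ℂ) : Matrix (Fin n) (Fin n) ℂ) *
          ((h : Matrix (Fin n) (Fin n) ℤ).map (Int.cast : ℤ → ℂ)) *
          (P : Matrix (Fin n) (Fin n) ℂ)) i i = 1

/-!
A power `γ ^ k` lies in the unipotent finite-index subgroup, so `γs ^ k = γ ^ k * γu⁻ᵏ` is both
semisimple and unipotent, hence `γs ^ k = 1`. Rationality comes from Newton's method for
`X ^ k - 1`, which converges near `γ` because `k` is invertible over `ℚ` and `γ ^ k` is
unipotent: run in the commutative algebra `ℚ[γ]` it yields a root `s` with `γ - s` nilpotent,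
and its uniqueness, in the commutative algebra generated by `γ`, `γs` and `s`, forces `γs = s`.
Thus `γs` is a rational polynomial in `γ`, and so is `γu = γs ^ (k - 1) * γ`.
-/

open Polynomial

theorem IsNilpotent.pow_sub_one {R : Type*} [Ring R] {a : R} (h : IsNilpotent (a - 1)) (k : ℕ) :
    IsNilpotent (a ^ k - 1) := by
  rw [← geom_sum_mul]
  exact Commute.isNilpotent_mul_left
    (Commute.sum_left _ _ _ fun i _ => (Commute.self_pow a i).symm.sub_right (Commute.one_right _))
    h

theorem Commute.isNilpotent_sub_one_of_mul {R : Type*} [Ring R] {a b : R} (hab : Commute a b)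
    (h : IsNilpotent (a * b - 1)) (hb : IsNilpotent (b - 1)) : IsNilpotent (a - 1) := by
  have hc : Commute (a * b) (a * (b - 1)) :=
    ((Commute.refl a).mul_left hab.symm).mul_right
      ((hab.mul_left (Commute.refl b)).sub_right (Commute.one_right _))
  rw [show a - 1 = (a * b - 1) - a * (b - 1) by noncomm_ring]
  exact (hc.sub_left (Commute.one_left _)).isNilpotent_sub h
    ((hab.sub_right (Commute.one_right a)).isNilpotent_mul_left hb)

theorem Units.isNilpotent_conj_iff {M : Type*} [MonoidWithZero M] (u : Mˣ) {x : M} :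
    IsNilpotent (u * x * ↑u⁻¹) ↔ IsNilpotent x := by
  simp [IsNilpotent, Units.conj_pow]

section RatAlgebra

variable {S : Type*} {k : ℕ}

theorem existsUnique_isNilpotent_sub_and_pow_eq_one [CommRing S] [Algebra ℚ S] {x : S}
    (hk : k ≠ 0) (hx : IsNilpotent (x ^ k - 1)) :
    ∃! r, IsNilpotent (x - r) ∧ r ^ k = 1 := by
  have hxk : IsUnit (x ^ k) := by simpa using hx.isUnit_one_add
  have hkS : IsUnit (k : S) := by
    simpa using (IsUnit.mk0 (k : ℚ) (by exact_mod_cast hk)).map (algebraMap ℚ S)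
  have hderiv : IsUnit (aeval x (derivative (X ^ k - 1 : ℚ[X]))) := by
    simpa [derivative_X_pow] using hkS.mul (((isUnit_pow_iff hk).1 hxk).pow (k - 1))
  simpa [sub_eq_zero] using
    existsUnique_nilpotent_sub_and_aeval_eq_zero (P := (X ^ k - 1 : ℚ[X])) (by simpa using hx)
      hderiv

variable [Ring S] [Algebra ℚ S]

theorem exists_mem_adjoin_pow_eq_one_isNilpotent_sub {x : S} (hk : k ≠ 0)
    (hx : IsNilpotent (x ^ k - 1)) :
    ∃ r ∈ Algebra.adjoin ℚ {x}, r ^ k = 1 ∧ IsNilpotent (x - r) := by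
  set C := Algebra.adjoin ℚ {x}
  let x' : C := ⟨x, Algebra.self_mem_adjoin_singleton ℚ x⟩
  have hx' : IsNilpotent (x' ^ k - 1) :=
    (IsNilpotent.map_iff (f := C.val) Subtype.val_injective).1 hx
  obtain ⟨r, hr, hrk⟩ := (existsUnique_isNilpotent_sub_and_pow_eq_one hk hx').exists
  exact ⟨r, r.2, congrArg C.val hrk, hr.map C.val⟩

open scoped IsMulCommutative in
theorem eq_of_pow_eq_one_of_isNilpotent_sub {x r s : S} (hk : k ≠ 0) (hxr : Commute x r)
    (hxs : Commute x s) (hrs : Commute r s) (hr : r ^ k = 1) (hs : s ^ k = 1)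
    (hnr : IsNilpotent (x - r)) (hns : IsNilpotent (x - s)) : r = s := by
  set C := Algebra.adjoin ℚ {x, r, s}
  have : IsMulCommutative C := Algebra.isMulCommutative_adjoin ℚ <| by
    simp only [Set.mem_insert_iff, Set.mem_singleton_iff]
    rintro a (rfl | rfl | rfl) b (rfl | rfl | rfl) <;>
      first | rfl | assumption | exact Commute.symm ‹_›
  let x' : C := ⟨x, Algebra.subset_adjoin (by simp)⟩
  let r' : C := ⟨r, Algebra.subset_adjoin (by simp)⟩
  let s' : C := ⟨s, Algebra.subset_adjoin (by simp)⟩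
  have hval : Function.Injective C.val := Subtype.val_injective
  have hr' : r' ^ k = 1 := hval hr
  have hs' : s' ^ k = 1 := hval hs
  have hnr' : IsNilpotent (x' - r') := (IsNilpotent.map_iff hval).1 hnr
  have hx' : IsNilpotent (x' ^ k - 1) := by
    simpa [hr'] using isNilpotent_aeval_sub_of_isNilpotent_sub (X ^ k : ℚ[X]) hnr'
  exact congrArg C.val <| (existsUnique_isNilpotent_sub_and_pow_eq_one hk hx').unique
    ⟨hnr', hr'⟩ ⟨(IsNilpotent.map_iff hval).1 hns, hs'⟩

theorem mem_of_pow_eq_one_of_isNilpotent_sub {T : Subalgebra ℚ S} {x s : S} (hxT : x ∈ T)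
    (hk : k ≠ 0) (hx : IsNilpotent (x ^ k - 1)) (hxs : Commute x s) (hs : s ^ k = 1)
    (hn : IsNilpotent (x - s)) : s ∈ T := by
  obtain ⟨r, hr, hrk, hxr⟩ := exists_mem_adjoin_pow_eq_one_isNilpotent_sub hk hx
  have hsr : s = r := eq_of_pow_eq_one_of_isNilpotent_sub hk hxs
    (Algebra.commute_of_mem_adjoin_self hr)
    (Algebra.commute_of_mem_adjoin_singleton_of_commute hr hxs.symm) hs hrk hn hxr
  exact hsr ▸ Algebra.adjoin_le (Set.singleton_subset_iff.2 hxT) hr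

end RatAlgebra

namespace Matrix

variable {n : ℕ}

theorem isUnipotent_of_isUpperTriangular {R : Type*} [CommRing R] {T : Matrix (Fin n) (Fin n) R}
    (hT : T.IsUpperTriangular) (hdiag : ∀ i, T i i = 1) : T.IsUnipotent := by
  have hchar : T.charpoly = (X - 1) ^ n := by
    simp [charpoly_of_isUpperTriangular T hT, hdiag]
  exact ⟨n, by simpa [hchar] using T.aeval_self_charpoly⟩

theorem isUnipotent_conj_iff {R : Type*} [CommRing R] (P : GL (Fin n) R)
    {A : Matrix (Fin n) (Fin n) R} :
    ((P : Matrix (Fin n) (Fin n) R) * A * ((P⁻¹ : GL (Fin n) R) : Matrix (Fin n) (Fin n) R)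
      ).IsUnipotent ↔ A.IsUnipotent := by
  have : (P : Matrix (Fin n) (Fin n) R) * A * ((P⁻¹ : GL (Fin n) R) : Matrix (Fin n) (Fin n) R)
      - 1 = P * (A - 1) * ((P⁻¹ : GL (Fin n) R) : Matrix (Fin n) (Fin n) R) := by
    rw [mul_sub, sub_mul, mul_one, Units.mul_inv]
  rw [IsUnipotent, this, Units.isNilpotent_conj_iff, IsUnipotent]

variable {K : Type*} [Field K]

theorem IsSemisimpleOver.pow {R : Type*} [CommRing R] {f : R →+* K}
    {A : Matrix (Fin n) (Fin n) R} (hA : A.IsSemisimpleOver f) (k : ℕ) :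
    (A ^ k).IsSemisimpleOver f := by
  obtain ⟨P, d, hPd⟩ := hA
  refine ⟨P, d ^ k, ?_⟩
  rw [← diagonal_pow, ← Units.conj_pow, ← hPd, ← RingHom.mapMatrix_apply, map_pow]
  rfl

theorem IsSemisimpleOver.eq_one_of_isUnipotent {A : Matrix (Fin n) (Fin n) K}
    (hs : A.IsSemisimpleOver (RingHom.id K)) (hu : A.IsUnipotent) : A = 1 := by
  obtain ⟨P, d, hPd⟩ := hs
  rw [RingHom.coe_id, map_id] at hPd
  subst hPd
  rw [isUnipotent_conj_iff, IsUnipotent, ← diagonal_one, diagonal_sub] at hu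
  obtain ⟨m, hm⟩ := hu
  have hd : d = 1 := funext fun i => sub_eq_zero.1 <|
    IsNilpotent.eq_zero ⟨m, by simpa [diagonal_pow] using congrFun₂ hm i i⟩
  simp [hd]

theorem exists_ratCast_of_mem_range_mapMatrix [CharZero K] {M : Matrix (Fin n) (Fin n) K}
    (hM : M ∈ (Algebra.ofId ℚ K).mapMatrix.range) (i j : Fin n) : ∃ q : ℚ, M i j = q := by
  obtain ⟨Q, rfl⟩ := hM
  exact ⟨Q i j, eq_ratCast (algebraMap ℚ K) _⟩

end Matrix

theorem Subgroup.IsVirtuallyUnipotent.exists_pow_isUnipotent {n : ℕ}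
    {Γ : Subgroup (GL (Fin n) ℤ)} (hΓ : Γ.IsVirtuallyUnipotent) {γ : GL (Fin n) ℤ} (hγ : γ ∈ Γ) :
    ∃ k ≠ 0, (((γ : Matrix (Fin n) (Fin n) ℤ).map (Int.cast : ℤ → ℂ)) ^ k).IsUnipotent := by
  obtain ⟨H, -, hrel, P, hP⟩ := hΓ
  obtain ⟨k, hk, -, hkH, -⟩ := Subgroup.exists_pow_mem_of_relIndex_ne_zero hrel hγ
  obtain ⟨htri, hdiag⟩ := hP _ hkH
  have := (Matrix.isUnipotent_conj_iff P⁻¹).1 <| by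
    rw [inv_inv]; exact Matrix.isUnipotent_of_isUpperTriangular htri hdiag
  rw [Units.val_pow_eq_pow_val] at this
  refine ⟨k, hk.ne', ?_⟩
  convert this using 1
  exact (map_pow (Int.castRingHom ℂ).mapMatrix _ k).symm

theorem jordan_factors_of_virtually_unipotent_general {n : ℕ}
    (Γ : Subgroup (GL (Fin n) ℤ))
    (hvu : Γ.IsVirtuallyUnipotent)
    (γ : GL (Fin n) ℤ) (hγ : γ ∈ Γ)
    (γs γu : GL (Fin n) ℂ)
    (hdec : Matrix.GeneralLinearGroup.map (n := Fin n) (Int.castRingHom ℂ) γ = γs * γu)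
    (hs : Matrix.IsSemisimpleOver (RingHom.id ℂ) (γs : Matrix (Fin n) (Fin n) ℂ))
    (hu : Matrix.IsUnipotent (γu : Matrix (Fin n) (Fin n) ℂ))
    (hcomm : Commute γs γu) :
    IsOfFinOrder γs ∧
      (∀ i j : Fin n, ∃ q : ℚ, (γs : Matrix (Fin n) (Fin n) ℂ) i j = (q : ℂ)) ∧
      (∀ i j : Fin n, ∃ q : ℚ, (γu : Matrix (Fin n) (Fin n) ℂ) i j = (q : ℂ)) := by
  obtain ⟨k, hk, hAk⟩ := hvu.exists_pow_isUnipotent hγ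
  set A := (γ : Matrix (Fin n) (Fin n) ℤ).map (Int.cast : ℤ → ℂ)
  have hA : A = γs * γu := congrArg Units.val hdec
  have hsu : Commute (γs : Matrix (Fin n) (Fin n) ℂ) γu := hcomm.units_val
  have hsk : (γs : Matrix (Fin n) (Fin n) ℂ) ^ k = 1 :=
    (hs.pow k).eq_one_of_isUnipotent <| (hsu.pow_pow k k).isNilpotent_sub_one_of_mul
      (by rwa [← hsu.mul_pow, ← hA]) (hu.pow_sub_one k)
  have hAγs : IsNilpotent (A - γs) := by
    rw [hA, ← mul_sub_one]
    exact (hsu.sub_right (Commute.one_right _)).isNilpotent_mul_left hu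
  set ψ := (Algebra.ofId ℚ ℂ).mapMatrix (m := Fin n)
  have hAψ : A ∈ ψ.range :=
    ⟨(γ : Matrix (Fin n) (Fin n) ℤ).map (Int.cast : ℤ → ℚ), by ext; simp [ψ, A]⟩
  have hsψ : (γs : Matrix (Fin n) (Fin n) ℂ) ∈ ψ.range :=
    mem_of_pow_eq_one_of_isNilpotent_sub hAψ hk hAk
      (hA ▸ (Commute.refl _).mul_left hsu.symm) hsk hAγs
  have hγu : (γu : Matrix (Fin n) (Fin n) ℂ) = (γs : Matrix (Fin n) (Fin n) ℂ) ^ (k - 1) * A := by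
    rw [hA, ← mul_assoc, ← pow_succ, Nat.sub_add_cancel (Nat.one_le_iff_ne_zero.2 hk), hsk, one_mul]
  refine ⟨isOfFinOrder_iff_pow_eq_one.2 ⟨k, Nat.pos_of_ne_zero hk, Units.ext (by simpa using hsk)⟩,
    Matrix.exists_ratCast_of_mem_range_mapMatrix hsψ, ?_⟩
  exact Matrix.exists_ratCast_of_mem_range_mapMatrix
    (hγu ▸ ψ.range.mul_mem (ψ.range.pow_mem hsψ _) hAψ)

/-- For `γ` in a torsion-free virtually unipotent subgroup of `GL(n,ℤ)`, the semisimple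
Jordan factor `γ_s` has finite order, and both Jordan factors have rational entries. -/
theorem jordan_factors_of_virtually_unipotent {n : ℕ}
    (Γ : Subgroup (GL (Fin n) ℤ))
    (htf : ∀ g ∈ Γ, IsOfFinOrder g → g = 1)
    (hvu : Γ.IsVirtuallyUnipotent)
    (γ : GL (Fin n) ℤ) (hγ : γ ∈ Γ)
    (γs γu : GL (Fin n) ℂ)
    (hdec : Matrix.GeneralLinearGroup.map (n := Fin n) (Int.castRingHom ℂ) γ = γs * γu)
    (hs : Matrix.IsSemisimpleOver (RingHom.id ℂ) (γs : Matrix (Fin n) (Fin n) ℂ))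
    (hu : Matrix.IsUnipotent (γu : Matrix (Fin n) (Fin n) ℂ))
    (hcomm : Commute γs γu) :
    IsOfFinOrder γs ∧
      (∀ i j : Fin n, ∃ q : ℚ, (γs : Matrix (Fin n) (Fin n) ℂ) i j = (q : ℂ)) ∧
      (∀ i j : Fin n, ∃ q : ℚ, (γu : Matrix (Fin n) (Fin n) ℂ) i j = (q : ℂ)) :=
  jordan_factors_of_virtually_unipotent_general Γ hvu γ hγ γs γu hdec hs hu hcomm
end

section
/- Let Γ be a crystallographic group, realized as a subgroup of ℝ^m ⋊ GL(m, ℤ) with translation lattice Γ_u ≅ ℤ^m of finite index and finite holonomy group θ. Then the set of semisimple factors {γ_s : γ ∈ Γ} (under Jordan decomposition of the affine action) is finite up to conjugation by elements of Γ_u. -/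
open Matrix

/-- The group of affine self-equivalences of `ℚ^m`. -/
abbrev AffQ (m : ℕ) := (Fin m → ℚ) ≃ᵃ[ℚ] (Fin m → ℚ)

/-!
Fix a linear part `S` occurring in `Γ`; it has finite order `n` because the holonomy is finite.
If `t` is the translation part of the semisimple factor of `g = (a, S)`, then `t ∈ im (S - 1)` and
`a - t` is fixed by `S`, so `n • t = ∑_{k < n} (a - S^k a)` is integral. Conjugating by the
translation `v ∈ Γu` replaces `t` by `t + (S - 1) v`, so it suffices that the finitely generated
group `{t ∈ im (S - 1) | n • t ∈ ℤ^m}` has finite image modulo `(S - 1) Γu`. That image is a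
finitely generated torsion abelian group, since `Γu` spans `ℚ^m`, hence finite.
-/

open Set Submodule

section Affine

variable {k V : Type*} [Ring k] [AddCommGroup V] [Module k V]

theorem AffineEquiv.eq_inv_mul_mul_constVAdd {e e' : V ≃ᵃ[k] V} (v : V)
    (hlin : e'.linear = e.linear) (h0 : e' 0 = e 0 + (e.linear v - v)) :
    e' = (constVAdd k V v)⁻¹ * e * constVAdd k V v := by
  have decomp : ∀ f : V ≃ᵃ[k] V, ∀ x, f x = f.linear x + f 0 := fun f x =>
    congrFun f.toAffineMap.decomp x
  ext x
  rw [inv_def, constVAdd_symm, coe_mul, coe_mul, Function.comp_apply, Function.comp_apply,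
    constVAdd_apply, constVAdd_apply, vadd_eq_add, vadd_eq_add, decomp e', decomp e, hlin, h0,
    map_add]
  abel

def Subgroup.translations {P : Type*} [AddTorsor V P] (H : Subgroup (P ≃ᵃ[k] P)) :
    AddSubgroup V :=
  Subgroup.toAddSubgroup' (H.comap (AffineEquiv.constVAddHom k P))

end Affine

theorem Set.Finite.isOfFinOrder_apply_of_mem {G H : Type*} [Group G] [Group H] (f : G →* H)
    {Γ : Subgroup G} (hΓ : (f '' Γ).Finite) {g : G} (hg : g ∈ Γ) : IsOfFinOrder (f g) := by
  have : Finite (Γ.map f) := hΓ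
  exact Submonoid.isOfFinOrder_coe.2
    (isOfFinOrder_of_finite (⟨f g, Γ.mem_map_of_mem f hg⟩ : Γ.map f))

namespace Module.End

variable {R M : Type*} [Ring R] [AddCommGroup M] [Module R M] {S : Module.End R M} {n : ℕ}

theorem nsmul_eq_sum_sub_pow_apply (hSn : S ^ n = 1) {a t : M} (ht : t ∈ LinearMap.range (S - 1))
    (hat : a - t ∈ LinearMap.ker (S - 1)) :
    n • t = ∑ k ∈ Finset.range n, (a - (S ^ k) a) := by
  obtain ⟨y, rfl⟩ := ht
  have hfix : ∀ k, (S ^ k) (a - (S - 1) y) = a - (S - 1) y := fun k => by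
    rw [coe_pow]
    exact Function.IsFixedPt.iterate (sub_eq_zero.mp (by simpa using hat)) k
  have hgeom : (∑ k ∈ Finset.range n, S ^ k) ((S - 1) y) = 0 := by
    rw [← Module.End.mul_apply, geom_sum_mul, hSn, sub_self, LinearMap.zero_apply]
  calc n • (S - 1) y = ∑ k ∈ Finset.range n, ((S - 1) y - (S ^ k) ((S - 1) y)) := by
        rw [Finset.sum_sub_distrib, Finset.sum_const, Finset.card_range, ← LinearMap.sum_apply,
          hgeom, sub_zero]
    _ = ∑ k ∈ Finset.range n, (a - (S ^ k) a) := by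
        refine Finset.sum_congr rfl fun k _ => ?_
        conv_rhs => rw [← sub_add_cancel a ((S - 1) y), map_add, hfix]
        abel

theorem nsmul_mem_of_mapsTo (hSn : S ^ n = 1) {L : Submodule ℤ M} (hL : MapsTo S L L) {a t : M}
    (ha : a ∈ L) (ht : t ∈ LinearMap.range (S - 1)) (hat : a - t ∈ LinearMap.ker (S - 1)) :
    n • t ∈ L := by
  rw [nsmul_eq_sum_sub_pow_apply hSn ht hat]
  refine sum_mem fun k _ => sub_mem ha ?_
  rw [coe_pow]
  exact hL.iterate k ha

end Module.End

def intLattice (m : ℕ) : Submodule ℤ (Fin m → ℚ) := span ℤ (range (Pi.basisFun ℚ (Fin m)))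

theorem intLattice_fg (m : ℕ) : (intLattice m).FG :=
  fg_span (finite_range _)

theorem mem_intLattice {m : ℕ} {x : Fin m → ℚ} : x ∈ intLattice m ↔ ∀ i, ∃ k : ℤ, x i = k := by
  simp [intLattice, Module.Basis.mem_span_iff_repr_mem, eq_comm]

theorem mapsTo_intLattice {m : ℕ} {S : Module.End ℚ (Fin m → ℚ)}
    (hS : ∀ i j, ∃ k : ℤ, LinearMap.toMatrix' S i j = k) :
    MapsTo S (intLattice m) (intLattice m) := by
  have : intLattice m ≤ (intLattice m).comap (S.restrictScalars ℤ) := by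
    refine span_le.2 ?_
    rintro _ ⟨j, rfl⟩
    refine mem_intLattice.2 fun i => ?_
    obtain ⟨k, hk⟩ := hS i j
    exact ⟨k, by simpa [LinearMap.toMatrix'_apply, Pi.single_apply] using hk⟩
  exact fun x hx => this hx

theorem Submodule.finite_map_mkQ_of_le_span {M : Type*} [AddCommGroup M] [Module ℚ M]
    {N X : Submodule ℤ M} (hX : X.FG) (hXN : ∀ x ∈ X, x ∈ span ℚ (N : Set M)) :
    Finite (X.map N.mkQ) := by
  have : Module.Finite ℤ (X.map N.mkQ) := Module.Finite.iff_fg.2 (hX.map _)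
  refine Module.finite_of_fg_torsion _ fun ⟨_, x, hx, rfl⟩ => ?_
  obtain ⟨y, hy, z, hxy⟩ := (IsLocalization.mem_span_iff (nonZeroDivisors ℤ)).1 (hXN x hx)
  rw [span_coe_eq_restrictScalars, restrictScalars_self] at hy
  refine ⟨z, Subtype.ext ?_⟩
  have : (z : ℤ) • x = y := by
    have hz : ((z : ℤ) : ℚ) * IsLocalization.mk' ℚ 1 z = 1 := by simp
    rw [hxy, ← Int.cast_smul_eq_zsmul ℚ, smul_smul, hz, one_smul]
  show (z : ℤ) • N.mkQ x = 0
  rw [← map_smul, this, mkQ_apply, Quotient.mk_eq_zero]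
  exact hy

section Lattice

variable {M : Type*} [AddCommGroup M] [Module ℚ M] {V L : Submodule ℤ M} (S : M →ₗ[ℚ] M)

theorem finite_mkQ_image_range_sub_id (hV : span ℚ (V : Set M) = ⊤) (hL : L.FG) {n : ℕ}
    (hn : n ≠ 0) :
    ((V.map ((S - LinearMap.id).restrictScalars ℤ)).mkQ ''
      {t | t ∈ LinearMap.range (S - LinearMap.id) ∧ n • t ∈ L}).Finite := by
  set D := S - LinearMap.id
  set X : Submodule ℤ M := L.comap (n • LinearMap.id) ⊓ (LinearMap.range D).restrictScalars ℤ
  have hXfg : X.FG := by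
    have := IsAddTorsionFree.of_module_rat (M := M)
    refine fg_of_fg_map_injective (n • LinearMap.id) (nsmul_right_injective hn) (hL.of_le ?_)
    rintro _ ⟨x, hx, rfl⟩
    exact hx.1
  have hXN : ∀ x ∈ X, x ∈ span ℚ (V.map (D.restrictScalars ℤ) : Set M) := by
    intro x hx
    rw [map_coe, LinearMap.coe_restrictScalars, ← map_span, hV, Submodule.map_top]
    exact hx.2
  have := finite_map_mkQ_of_le_span hXfg hXN
  exact (Set.toFinite (X.map (V.map (D.restrictScalars ℤ)).mkQ : Set _)).subset
    (image_subset_iff.2 fun t ht => mem_map_of_mem (show t ∈ X from ⟨ht.2, ht.1⟩))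

theorem exists_finite_conj_reps (hV : span ℚ (V : Set M) = ⊤) (hL : L.FG) {n : ℕ} (hn : n ≠ 0)
    {T : Set (M ≃ᵃ[ℚ] M)}
    (hT : ∀ s ∈ T, (s.linear : M →ₗ[ℚ] M) = S ∧ s 0 ∈ LinearMap.range (S - LinearMap.id) ∧
      n • s 0 ∈ L) :
    ∃ F : Set (M ≃ᵃ[ℚ] M), F.Finite ∧ ∀ s ∈ T, ∃ r ∈ F, ∃ v ∈ V,
      s = (AffineEquiv.constVAdd ℚ M v)⁻¹ * r * AffineEquiv.constVAdd ℚ M v := by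
  set N := V.map ((S - LinearMap.id).restrictScalars ℤ)
  obtain ⟨F, hFT, hF⟩ := exists_subset_bijOn T fun s => N.mkQ (s 0)
  refine ⟨F, ?_, fun s hs => ?_⟩
  · refine Finite.of_finite_image ?_ hF.injOn
    rw [hF.image_eq]
    exact (finite_mkQ_image_range_sub_id S hV hL hn).subset
      (image_subset_iff.2 fun s hs => ⟨s 0, ⟨(hT s hs).2, rfl⟩⟩)
  obtain ⟨r, hr, hrs⟩ := hF.surjOn ⟨s, hs, rfl⟩
  have : s 0 - r 0 ∈ N := by
    rw [← Quotient.mk_eq_zero, Quotient.mk_sub]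
    exact sub_eq_zero.2 hrs.symm
  obtain ⟨v, hv, hvsr⟩ := this
  refine ⟨r, hr, v, hv, AffineEquiv.eq_inv_mul_mul_constVAdd v ?_ ?_⟩
  · exact LinearEquiv.toLinearMap_injective ((hT s hs).1.trans (hT r (hFT hr)).1.symm)
  · have hSv : r.linear v - v = s 0 - r 0 := by
      rw [← hvsr, ← (hT r (hFT hr)).1]
      rfl
    rw [hSv]
    abel

end Lattice

theorem crystallographic_semisimple_factors_finite_general {m : ℕ}
    (Γ Γu : Subgroup (AffQ m))
    (hhol : Set.Finite ((fun g : AffQ m => g.linear) '' (Γ : Set (AffQ m))))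
    (hintegral : ∀ g ∈ Γ, (∀ i, ∃ k : ℤ, g 0 i = (k : ℚ)) ∧
      ∀ i j, ∃ k : ℤ, LinearMap.toMatrix' (g.linear : (Fin m → ℚ) →ₗ[ℚ] (Fin m → ℚ)) i j = (k : ℚ))
    (hspan : Submodule.span ℚ
      {v : Fin m → ℚ | AffineEquiv.constVAdd ℚ (Fin m → ℚ) v ∈ Γu} = ⊤)
    (sfac : AffQ m → AffQ m)
    (hsfac : ∀ g ∈ Γ, (sfac g).linear = g.linear ∧
      (sfac g) 0 ∈ LinearMap.range ((g.linear : (Fin m → ℚ) →ₗ[ℚ] (Fin m → ℚ)) - LinearMap.id) ∧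
      g 0 - (sfac g) 0 ∈ LinearMap.ker ((g.linear : (Fin m → ℚ) →ₗ[ℚ] (Fin m → ℚ)) - LinearMap.id)) :
    ∃ F : Set (AffQ m), F.Finite ∧
      ∀ g ∈ Γ, ∃ s ∈ F, ∃ u ∈ Γu, sfac g = u⁻¹ * s * u := by
  have key : ∀ S ∈ (fun g : AffQ m => g.linear) '' (Γ : Set (AffQ m)), ∃ F : Set (AffQ m),
      F.Finite ∧ ∀ s ∈ sfac '' {g | g ∈ Γ ∧ g.linear = S}, ∃ r ∈ F,
        ∃ v ∈ Γu.translations.toIntSubmodule,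
          s = (AffineEquiv.constVAdd ℚ _ v)⁻¹ * r * AffineEquiv.constVAdd ℚ _ v := by
    rintro _ ⟨g₀, hg₀, rfl⟩
    have hS : IsOfFinOrder g₀.linear := hhol.isOfFinOrder_apply_of_mem AffineEquiv.linearHom hg₀
    have hSn : (g₀.linear : Module.End ℚ (Fin m → ℚ)) ^ orderOf g₀.linear = 1 := by
      have := congrArg LinearEquiv.automorphismGroup.toLinearMapMonoidHom
        (pow_orderOf_eq_one g₀.linear)
      rwa [map_pow, map_one] at this
    refine exists_finite_conj_reps (V := Γu.translations.toIntSubmodule) g₀.linear hspan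
      (intLattice_fg m) hS.orderOf_pos.ne' ?_
    rintro _ ⟨g, ⟨hg, hgl⟩, rfl⟩
    obtain ⟨hlin, hrange, hker⟩ := hsfac g hg
    obtain ⟨hint₀, hintS⟩ := hintegral g hg
    rw [hgl] at hrange hker hintS
    exact ⟨by rw [hlin, hgl], hrange, Module.End.nsmul_mem_of_mapsTo hSn
      (mapsTo_intLattice hintS) (mem_intLattice.2 hint₀) hrange hker⟩
  choose F hFfin hF using key
  refine ⟨⋃ S ∈ _, F S ‹_›, hhol.biUnion' hFfin, fun g hg => ?_⟩
  obtain ⟨r, hr, v, hv, hgr⟩ := hF g.linear ⟨g, hg, rfl⟩ (sfac g) ⟨g, ⟨hg, rfl⟩, rfl⟩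
  exact ⟨r, mem_iUnion₂.2 ⟨g.linear, ⟨g, hg, rfl⟩, hr⟩, _, hv, hgr⟩

/-- Let `Γ` be a crystallographic group, realized as a group of affine transformations of
`ℚ^m` with integral translation and linear parts, translation lattice `Γu` of finite
index (spanning `ℚ^m`) and finite holonomy. If `sfac` assigns to each `g ∈ Γ` its
semisimple Jordan factor (same linear part; translation part in `im(S - I)`, the
complement of the fixed space `ker(S - I)`), then the set of semisimple factors of
elements of `Γ` is finite up to conjugation by elements of `Γu`. -/
theorem crystallographic_semisimple_factors_finite {m : ℕ}
    (Γ Γu : Subgroup (AffQ m))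
    (hΓu : ∀ g, g ∈ Γu ↔ g ∈ Γ ∧ g.linear = LinearEquiv.refl ℚ (Fin m → ℚ))
    (hfinindex : Γu.relIndex Γ ≠ 0)
    (hhol : Set.Finite ((fun g : AffQ m => g.linear) '' (Γ : Set (AffQ m))))
    (hintegral : ∀ g ∈ Γ, (∀ i, ∃ k : ℤ, g 0 i = (k : ℚ)) ∧
      ∀ i j, ∃ k : ℤ, LinearMap.toMatrix' (g.linear : (Fin m → ℚ) →ₗ[ℚ] (Fin m → ℚ)) i j = (k : ℚ))
    (hspan : Submodule.span ℚ
      {v : Fin m → ℚ | AffineEquiv.constVAdd ℚ (Fin m → ℚ) v ∈ Γu} = ⊤)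
    (sfac : AffQ m → AffQ m)
    (hsfac : ∀ g ∈ Γ, (sfac g).linear = g.linear ∧
      (sfac g) 0 ∈ LinearMap.range ((g.linear : (Fin m → ℚ) →ₗ[ℚ] (Fin m → ℚ)) - LinearMap.id) ∧
      g 0 - (sfac g) 0 ∈ LinearMap.ker ((g.linear : (Fin m → ℚ) →ₗ[ℚ] (Fin m → ℚ)) - LinearMap.id)) :
    ∃ F : Set (AffQ m), F.Finite ∧
      ∀ g ∈ Γ, ∃ s ∈ F, ∃ u ∈ Γu, sfac g = u⁻¹ * s * u :=
  crystallographic_semisimple_factors_finite_general Γ Γu hhol hintegral hspan sfac hsfac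
end
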